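/- arXiv:1606.04325 — 4 statements merged into one kernel-verified Lean document; each statement's English description precedes it below -/
import Mathlib

section
/- Let Ω ⊂ ℝ³ be a Lebesgue-measurable set of finite Lebesgue measure |Ω|, let J ∈ L¹(ℝ³) with c_J := ‖J‖_{L¹(ℝ³)}, and suppose a(x) := ∫_Ω J(x−y) dy ≥ 0 for almost every x ∈ Ω. Let F : ℝ → ℝ be continuous with F(s) ≥ c₁ s² − c₂ for all s ∈ ℝ, where c₁ > c_J/2 and c₂ ≥ 0. Then for every φ ∈ L²(Ω) with F∘φ ∈ L¹(Ω), every θ ∈ L²(Ω), and every ε > 0: (1/2)∫_Ω a φ² dx − (1/2)∬_{Ω×Ω} J(x−y) φ(x) φ(y) dx dy + ∫_Ω F(φ) dx + (ε/2)∫_Ω θ² dx ≥ (c₁ − c_J/2) ‖φ‖²_{L²(Ω)} − c₂ |Ω| + (ε/2) ‖θ‖²_{L²(Ω)}. -/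
/-!
Since `a ≥ 0`, the term `½∫ a φ²` can be dropped, and (H3) bounds `∫ F(φ)` below by
`c₁ ‖φ‖² − c₂ |Ω|`. The interaction term is controlled by Schur's test: from
`|φ(x) φ(y)| ≤ (φ(x)² + φ(y)²) / 2` and the translation invariance bounds
`∫_Ω |J(x − y)| dy ≤ c_J`, `∫_Ω |J(x − y)| dx ≤ c_J`, one gets
`|∬_{Ω×Ω} J(x − y) φ(x) φ(y)| ≤ c_J ‖φ‖²`.
-/

open MeasureTheory

theorem kernel_mul_snd_eq_swap {G : Type*} [AddGroup G] (K ψ : G → ℝ) :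
    (fun p : G × G => K (-(p.1 - p.2)) * ψ p.1) ∘ Prod.swap
      = fun p => K (p.1 - p.2) * ψ p.2 := by
  funext p
  simp [neg_sub]

section ConvolutionKernel

variable {G : Type*} [MeasurableSpace G] [AddGroup G] [MeasurableAdd₂ G] [MeasurableNeg G]
  {μ : Measure G} [μ.IsAddLeftInvariant] {K ψ : G → ℝ}

theorem MeasureTheory.AEStronglyMeasurable.comp_sub_restrict_prod [SFinite μ]
    (hK : AEStronglyMeasurable K μ) (s : Set G) :
    AEStronglyMeasurable (fun p : G × G => K (p.1 - p.2))
      ((μ.restrict s).prod (μ.restrict s)) := by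
  rw [Measure.prod_restrict]
  exact (hK.comp_quasiMeasurePreserving (quasiMeasurePreserving_sub μ μ)).restrict

theorem setIntegral_comp_sub_left_le_integral [μ.IsNegInvariant] (hK : Integrable K μ)
    (hK₀ : ∀ z, 0 ≤ K z) (s : Set G) (x : G) : ∫ y in s, K (x - y) ∂μ ≤ ∫ z, K z ∂μ :=
  calc ∫ y in s, K (x - y) ∂μ ≤ ∫ y, K (x - y) ∂μ :=
        setIntegral_le_integral (hK.comp_sub_left x) (.of_forall fun _ => hK₀ _)
    _ = ∫ z, K z ∂μ := integral_sub_left_eq_self K μ x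

variable [SFinite μ] [μ.IsNegInvariant]

theorem integrable_kernel_mul_fst (hK : Integrable K μ) (hK₀ : ∀ z, 0 ≤ K z) (s : Set G)
    (hψ : Integrable ψ (μ.restrict s)) (hψ₀ : ∀ x, 0 ≤ ψ x) :
    Integrable (fun p : G × G => K (p.1 - p.2) * ψ p.1)
      ((μ.restrict s).prod (μ.restrict s)) := by
  have hmeas : AEStronglyMeasurable (fun p : G × G => K (p.1 - p.2) * ψ p.1)
      ((μ.restrict s).prod (μ.restrict s)) :=
    (hK.aestronglyMeasurable.comp_sub_restrict_prod s).mul hψ.aestronglyMeasurable.comp_fst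
  refine (integrable_prod_iff hmeas).2
    ⟨.of_forall fun x => (hK.comp_sub_left x).integrableOn.mul_const (ψ x), ?_⟩
  refine (hψ.const_mul (∫ z, K z ∂μ)).mono' hmeas.norm.integral_prod_right'
    (.of_forall fun x => ?_)
  have hnorm : ∀ y, ‖K (x - y) * ψ x‖ = K (x - y) * ψ x := fun y =>
    Real.norm_of_nonneg (mul_nonneg (hK₀ _) (hψ₀ _))
  simp only [hnorm, integral_mul_const]
  rw [Real.norm_of_nonneg (mul_nonneg (integral_nonneg fun _ => hK₀ _) (hψ₀ x))]
  exact mul_le_mul_of_nonneg_right (setIntegral_comp_sub_left_le_integral hK hK₀ s x) (hψ₀ x)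

theorem integral_kernel_mul_fst_le (hK : Integrable K μ) (hK₀ : ∀ z, 0 ≤ K z) (s : Set G)
    (hψ : Integrable ψ (μ.restrict s)) (hψ₀ : ∀ x, 0 ≤ ψ x) :
    ∫ p, K (p.1 - p.2) * ψ p.1 ∂(μ.restrict s).prod (μ.restrict s)
      ≤ (∫ z, K z ∂μ) * ∫ x in s, ψ x ∂μ := by
  rw [integral_prod _ (integrable_kernel_mul_fst hK hK₀ s hψ hψ₀), ← integral_const_mul]
  simp only [integral_mul_const]
  exact integral_mono_of_nonneg
    (.of_forall fun x => mul_nonneg (integral_nonneg fun _ => hK₀ _) (hψ₀ x))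
    (hψ.const_mul _)
    (.of_forall fun x =>
      mul_le_mul_of_nonneg_right (setIntegral_comp_sub_left_le_integral hK hK₀ s x) (hψ₀ x))

theorem integrable_kernel_mul_snd (hK : Integrable K μ) (hK₀ : ∀ z, 0 ≤ K z) (s : Set G)
    (hψ : Integrable ψ (μ.restrict s)) (hψ₀ : ∀ x, 0 ≤ ψ x) :
    Integrable (fun p : G × G => K (p.1 - p.2) * ψ p.2)
      ((μ.restrict s).prod (μ.restrict s)) := by
  rw [← kernel_mul_snd_eq_swap K ψ]
  exact (integrable_kernel_mul_fst (K := fun z => K (-z)) hK.comp_neg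
    (fun z => hK₀ (-z)) s hψ hψ₀).swap

theorem integral_kernel_mul_snd_le (hK : Integrable K μ) (hK₀ : ∀ z, 0 ≤ K z) (s : Set G)
    (hψ : Integrable ψ (μ.restrict s)) (hψ₀ : ∀ x, 0 ≤ ψ x) :
    ∫ p, K (p.1 - p.2) * ψ p.2 ∂(μ.restrict s).prod (μ.restrict s)
      ≤ (∫ z, K z ∂μ) * ∫ x in s, ψ x ∂μ := by
  calc ∫ p, K (p.1 - p.2) * ψ p.2 ∂(μ.restrict s).prod (μ.restrict s)
      = ∫ p, K (-(p.1 - p.2)) * ψ p.1 ∂(μ.restrict s).prod (μ.restrict s) := by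
        rw [← kernel_mul_snd_eq_swap K ψ]
        exact integral_prod_swap (fun p : G × G => K (-(p.1 - p.2)) * ψ p.1)
    _ ≤ (∫ z, K (-z) ∂μ) * ∫ x in s, ψ x ∂μ :=
        integral_kernel_mul_fst_le (K := fun z => K (-z)) hK.comp_neg
          (fun z => hK₀ (-z)) s hψ hψ₀
    _ = (∫ z, K z ∂μ) * ∫ x in s, ψ x ∂μ := by rw [integral_neg_eq_self]

theorem abs_integral_kernel_mul_mul_le {J φ : G → ℝ} (hJ : Integrable J μ) (s : Set G)
    (hφ : Integrable (fun x => φ x ^ 2) (μ.restrict s)) :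
    |∫ p, J (p.1 - p.2) * φ p.1 * φ p.2 ∂(μ.restrict s).prod (μ.restrict s)|
      ≤ (∫ z, |J z| ∂μ) * ∫ x in s, φ x ^ 2 ∂μ := by
  have hK₀ : ∀ z, 0 ≤ |J z| := fun _ => abs_nonneg _
  have hφ₀ : ∀ x, 0 ≤ φ x ^ 2 := fun _ => sq_nonneg _
  have h₁ := integrable_kernel_mul_fst hJ.abs hK₀ s hφ hφ₀
  have h₂ := integrable_kernel_mul_snd hJ.abs hK₀ s hφ hφ₀
  have hpoint : ∀ p : G × G, ‖J (p.1 - p.2) * φ p.1 * φ p.2‖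
      ≤ (|J (p.1 - p.2)| * φ p.1 ^ 2 + |J (p.1 - p.2)| * φ p.2 ^ 2) / 2 := fun p => by
    have hamgm := two_mul_le_add_sq |φ p.1| |φ p.2|
    rw [sq_abs, sq_abs] at hamgm
    rw [Real.norm_eq_abs, mul_assoc, abs_mul, abs_mul]
    nlinarith [abs_nonneg (J (p.1 - p.2))]
  calc |∫ p, J (p.1 - p.2) * φ p.1 * φ p.2 ∂(μ.restrict s).prod (μ.restrict s)|
      ≤ ∫ p, (|J (p.1 - p.2)| * φ p.1 ^ 2 + |J (p.1 - p.2)| * φ p.2 ^ 2) / 2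
          ∂(μ.restrict s).prod (μ.restrict s) :=
        (norm_integral_le_integral_norm _).trans <| integral_mono_of_nonneg
          (.of_forall fun _ => norm_nonneg _) ((h₁.add h₂).div_const 2) (.of_forall hpoint)
    _ ≤ (∫ z, |J z| ∂μ) * ∫ x in s, φ x ^ 2 ∂μ := by
        rw [integral_div, integral_add h₁ h₂]
        linarith [integral_kernel_mul_fst_le hJ.abs hK₀ s hφ hφ₀,
          integral_kernel_mul_snd_le hJ.abs hK₀ s hφ hφ₀]

end ConvolutionKernel

theorem integral_comp_ge_of_ge_quadratic {α : Type*} [MeasurableSpace α] {μ : Measure α}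
    [IsFiniteMeasure μ] {F : ℝ → ℝ} {c₁ c₂ : ℝ} (hF : ∀ s, F s ≥ c₁ * s ^ 2 - c₂)
    {φ : α → ℝ} (hφ : MemLp φ 2 μ) (hFφ : Integrable (fun x => F (φ x)) μ) :
    ∫ x, F (φ x) ∂μ ≥ c₁ * (∫ x, φ x ^ 2 ∂μ) - c₂ * μ.real Set.univ := by
  have hφ2 := hφ.integrable_sq
  calc ∫ x, F (φ x) ∂μ ≥ ∫ x, (c₁ * φ x ^ 2 - c₂) ∂μ :=
        integral_mono ((hφ2.const_mul c₁).sub (integrable_const c₂)) hFφ fun x => hF (φ x)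
    _ = c₁ * (∫ x, φ x ^ 2 ∂μ) - c₂ * μ.real Set.univ := by
        rw [integral_sub (hφ2.const_mul c₁) (integrable_const c₂), integral_const_mul,
          integral_const, smul_eq_mul]
        ring

theorem energy_coercivity_general
    (Ω : Set (EuclideanSpace ℝ (Fin 3)))
    (hΩfin : volume Ω < ⊤)
    (J : EuclideanSpace ℝ (Fin 3) → ℝ) (hJ : Integrable J)
    (ha_pos : ∀ᵐ x ∂(volume.restrict Ω), (∫ y in Ω, J (x - y)) ≥ 0)
    (F : ℝ → ℝ)
    (c₁ c₂ : ℝ)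
    (hF_low : ∀ s, F s ≥ c₁ * s ^ 2 - c₂)
    (φ θ : EuclideanSpace ℝ (Fin 3) → ℝ)
    (hφ : MemLp φ 2 (volume.restrict Ω))
    (hFφ : IntegrableOn (fun x => F (φ x)) Ω)
    (ε : ℝ) :
    (1 / 2 : ℝ) * (∫ x in Ω, (∫ y in Ω, J (x - y)) * (φ x) ^ 2)
      - (1 / 2 : ℝ) * (∫ p in Ω ×ˢ Ω, J (p.1 - p.2) * φ p.1 * φ p.2)
      + (∫ x in Ω, F (φ x))
      + ε / 2 * (∫ x in Ω, (θ x) ^ 2)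
    ≥ (c₁ - (∫ x, |J x|) / 2) * (∫ x in Ω, (φ x) ^ 2)
      - c₂ * (volume Ω).toReal
      + ε / 2 * (∫ x in Ω, (θ x) ^ 2) := by
  have : IsFiniteMeasure (volume.restrict Ω) := isFiniteMeasure_restrict.2 hΩfin.ne
  have ha : 0 ≤ ∫ x in Ω, (∫ y in Ω, J (x - y)) * φ x ^ 2 :=
    integral_nonneg_of_ae <| by
      filter_upwards [ha_pos] with x hx using mul_nonneg hx (sq_nonneg _)
  have hFφ_ge := integral_comp_ge_of_ge_quadratic hF_low hφ hFφ
  rw [measureReal_restrict_apply_univ, measureReal_def] at hFφ_ge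
  have hJφ : ∫ p in Ω ×ˢ Ω, J (p.1 - p.2) * φ p.1 * φ p.2
      ≤ (∫ x, |J x|) * ∫ x in Ω, φ x ^ 2 := by
    rw [Measure.volume_eq_prod, ← Measure.prod_restrict]
    exact (abs_le.1 (abs_integral_kernel_mul_mul_le hJ Ω hφ.integrable_sq)).2
  linarith

/-- coercivity of the energy:
`½∫ a φ² − ½∬ J(x−y) φ(x) φ(y) + ∫ F(φ) + (ε/2)∫ θ²
  ≥ (c₁ − c_J/2) ‖φ‖² − c₂ |Ω| + (ε/2) ‖θ‖²`
under (H1) `a ≥ 0` a.e. and (H3) `F(s) ≥ c₁ s² − c₂` with `c₁ > c_J/2`. -/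
theorem energy_coercivity
    (Ω : Set (EuclideanSpace ℝ (Fin 3))) (hΩ : MeasurableSet Ω)
    (hΩfin : volume Ω < ⊤)
    (J : EuclideanSpace ℝ (Fin 3) → ℝ) (hJ : Integrable J)
    (ha_pos : ∀ᵐ x ∂(volume.restrict Ω), (∫ y in Ω, J (x - y)) ≥ 0)
    (F : ℝ → ℝ) (hF : Continuous F)
    (c₁ c₂ : ℝ) (hc₁ : c₁ > (∫ x, |J x|) / 2) (hc₂ : 0 ≤ c₂)
    (hF_low : ∀ s, F s ≥ c₁ * s ^ 2 - c₂)
    (φ θ : EuclideanSpace ℝ (Fin 3) → ℝ)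
    (hφ : MemLp φ 2 (volume.restrict Ω))
    (hFφ : IntegrableOn (fun x => F (φ x)) Ω)
    (hθ : MemLp θ 2 (volume.restrict Ω))
    (ε : ℝ) (hε : 0 < ε) :
    (1 / 2 : ℝ) * (∫ x in Ω, (∫ y in Ω, J (x - y)) * (φ x) ^ 2)
      - (1 / 2 : ℝ) * (∫ p in Ω ×ˢ Ω, J (p.1 - p.2) * φ p.1 * φ p.2)
      + (∫ x in Ω, F (φ x))
      + ε / 2 * (∫ x in Ω, (θ x) ^ 2)
    ≥ (c₁ - (∫ x, |J x|) / 2) * (∫ x in Ω, (φ x) ^ 2)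
      - c₂ * (volume Ω).toReal
      + ε / 2 * (∫ x in Ω, (θ x) ^ 2) :=
  energy_coercivity_general Ω hΩfin J hJ ha_pos F c₁ c₂ hF_low φ θ hφ hFφ ε
end

section
/- Let Ω ⊂ ℝ³ be a Lebesgue-measurable set of finite Lebesgue measure |Ω|, let J ∈ L¹(ℝ³) be even with c_J := ‖J‖_{L¹(ℝ³)} and with a(x) := ∫_Ω J(x−y) dy ≥ 0 for almost every x ∈ Ω. Let F : ℝ → ℝ be continuous with F(s) ≥ c₁ s² − c₂ for all s ∈ ℝ, where c₁ > c_J/2 and c₂ ≥ 0, and let M₀ ∈ ℝ. Then there exists a constant C ≥ 0 such that for every φ ∈ L²(Ω) with F∘φ ∈ L¹(Ω): ∫_Ω a φ² dx + 2 ∫_Ω F(φ) dx − ∬_{Ω×Ω} J(x−y) φ(y) (φ(x) − M₀) dy dx ≥ −C. -/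
open MeasureTheory

/-!
The local term is nonnegative because `a ≥ 0`, and `2 ∫ F(φ) ≥ 2 c₁ ‖φ‖² - 2 c₂ |Ω|`.
The nonlocal term is controlled by Schur's test: by AM-GM,
`|J(x-y) φ(y) (φ(x) - M₀)| ≤ ½ |J(x-y)| (φ(y)² + (φ(x) - M₀)²)`, and by translation invariance of
Lebesgue measure each majorant integrates to `c_J` times a squared `L²` norm. Finally
`(φ - M₀)² ≤ (1 + δ) φ² + (1 + δ⁻¹) M₀²`; for `δ` so small that `c_J (1 + δ) ≤ 2 c₁` all terms
quadratic in `φ` are absorbed, leaving a constant depending on `|Ω|`, `c₂`, `c_J`, `M₀`, `δ` only.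
-/

theorem sub_sq_le_one_add_mul_sq_add {δ : ℝ} (hδ : 0 < δ) (a b : ℝ) :
    (a - b) ^ 2 ≤ (1 + δ) * a ^ 2 + (1 + δ⁻¹) * b ^ 2 := by
  have h : 0 ≤ δ⁻¹ * (δ * a + b) ^ 2 := by positivity
  have expand : δ⁻¹ * (δ * a + b) ^ 2 = δ * a ^ 2 + 2 * a * b + δ⁻¹ * b ^ 2 := by
    field_simp
    ring
  linarith

namespace MeasureTheory

theorem integral_mul_sq_add_const {α : Type*} [MeasurableSpace α] {μ : Measure α}
    [IsFiniteMeasure μ] {φ : α → ℝ} (hφ : MemLp φ 2 μ) (a b : ℝ) :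
    ∫ x, (a * φ x ^ 2 + b) ∂μ = a * ∫ x, φ x ^ 2 ∂μ + μ.real Set.univ * b := by
  rw [integral_add (hφ.integrable_sq.const_mul a) (integrable_const b), integral_const_mul,
    integral_const, smul_eq_mul]

variable {G : Type*} [AddCommGroup G] [MeasurableSpace G] [MeasurableAdd₂ G] [MeasurableNeg G]
  {μ : Measure G} [SFinite μ] [μ.IsAddLeftInvariant] {J f u v : G → ℝ}

theorem Integrable.mul_abs_sub_snd (hf : Integrable f μ) (hJ : Integrable J μ) :
    Integrable (fun p : G × G => f p.2 * |J (p.1 - p.2)|) (μ.prod μ) :=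
  hf.convolution_integrand (ContinuousLinearMap.mul ℝ ℝ) hJ.abs

theorem integral_prod_mul_abs_sub_snd (hf : Integrable f μ) (hJ : Integrable J μ) :
    ∫ p, f p.2 * |J (p.1 - p.2)| ∂(μ.prod μ) = (∫ y, f y ∂μ) * ∫ z, |J z| ∂μ := by
  rw [integral_prod_symm _ (hf.mul_abs_sub_snd hJ)]
  simp_rw [integral_const_mul, integral_sub_right_eq_self (fun z => |J z|), integral_mul_const]

variable [μ.IsNegInvariant]

theorem Integrable.mul_abs_sub_fst (hf : Integrable f μ) (hJ : Integrable J μ) :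
    Integrable (fun p : G × G => f p.1 * |J (p.1 - p.2)|) (μ.prod μ) := by
  simpa only [Function.comp_def, Prod.fst_swap, Prod.snd_swap, neg_sub] using
    (hf.mul_abs_sub_snd hJ.comp_neg).swap

theorem integral_prod_mul_abs_sub_fst (hf : Integrable f μ) (hJ : Integrable J μ) :
    ∫ p, f p.1 * |J (p.1 - p.2)| ∂(μ.prod μ) = (∫ x, f x ∂μ) * ∫ z, |J z| ∂μ := by
  rw [integral_prod _ (hf.mul_abs_sub_fst hJ)]
  simp_rw [integral_const_mul, integral_sub_left_eq_self (fun z => |J z|), integral_mul_const]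

theorem abs_integral_integral_kernel_mul_le (hJ : Integrable J μ) (hu : MemLp u 2 μ)
    (hv : MemLp v 2 μ) :
    |∫ x, ∫ y, J (x - y) * u y * v x ∂μ ∂μ|
      ≤ (∫ z, |J z| ∂μ) / 2 * (∫ y, u y ^ 2 ∂μ + ∫ x, v x ^ 2 ∂μ) := by
  set M : G × G → ℝ := fun p => (u p.2 ^ 2 * |J (p.1 - p.2)| + v p.1 ^ 2 * |J (p.1 - p.2)|) / 2
  have hu2 := hu.integrable_sq.mul_abs_sub_snd hJ
  have hv2 := hv.integrable_sq.mul_abs_sub_fst hJ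
  have hM : Integrable M (μ.prod μ) := (hu2.add hv2).div_const 2
  have hM_eq : ∫ p, M p ∂(μ.prod μ)
      = (∫ z, |J z| ∂μ) / 2 * (∫ y, u y ^ 2 ∂μ + ∫ x, v x ^ 2 ∂μ) := by
    rw [integral_div, integral_add hu2 hv2, integral_prod_mul_abs_sub_snd hu.integrable_sq hJ,
      integral_prod_mul_abs_sub_fst hv.integrable_sq hJ]
    ring
  have hle : ∀ p : G × G, ‖J (p.1 - p.2) * u p.2 * v p.1‖ ≤ M p := fun p => by
    have amgm := mul_le_mul_of_nonneg_left (two_mul_le_add_sq |u p.2| |v p.1|)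
      (abs_nonneg (J (p.1 - p.2)))
    rw [sq_abs, sq_abs] at amgm
    rw [Real.norm_eq_abs, abs_mul, abs_mul]
    simp only [M]
    linarith
  have hmeas : AEStronglyMeasurable (fun p : G × G => J (p.1 - p.2) * u p.2 * v p.1) (μ.prod μ) :=
    ((hu.1.convolution_integrand (ContinuousLinearMap.mul ℝ ℝ) hJ.1).mul hv.1.comp_fst).congr
      (ae_of_all _ fun p => by simp only [Pi.mul_apply, ContinuousLinearMap.mul_apply']; ring)
  rw [integral_integral (f := fun x y => J (x - y) * u y * v x) (hM.mono' hmeas (ae_of_all _ hle)),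
    ← hM_eq]
  exact norm_integral_le_of_norm_le hM (ae_of_all _ hle)

theorem abs_setIntegral_setIntegral_kernel_mul_le (s : Set G) (hJ : Integrable J μ)
    (hu : MemLp u 2 (μ.restrict s)) (hv : MemLp v 2 (μ.restrict s)) :
    |∫ x in s, (∫ y in s, J (x - y) * u y * v x ∂μ) ∂μ|
      ≤ (∫ z, |J z| ∂μ) / 2 * (∫ y in s, u y ^ 2 ∂μ + ∫ x in s, v x ^ 2 ∂μ) := by
  rw [← Measure.restrict_toMeasurable_of_sFinite s] at hu hv ⊢
  set t := toMeasurable μ s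
  have ht : MeasurableSet t := measurableSet_toMeasurable μ s
  have hkernel : ∀ x, t.indicator (fun x => ∫ y in t, J (x - y) * u y * v x ∂μ) x
      = ∫ y, J (x - y) * t.indicator u y * t.indicator v x ∂μ := fun x => by
    by_cases hx : x ∈ t
    · rw [Set.indicator_of_mem hx, Set.indicator_of_mem hx, ← integral_indicator ht]
      congr 1 with y
      by_cases hy : y ∈ t <;> simp [hy]
    · simp [hx]
  have hsq : ∀ w : G → ℝ, ∫ y in t, w y ^ 2 ∂μ = ∫ y, t.indicator w y ^ 2 ∂μ := fun w => by
    rw [← integral_indicator ht]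
    congr 1 with y
    by_cases hy : y ∈ t <;> simp [hy]
  rw [hsq u, hsq v, ← integral_indicator ht]
  simp only [hkernel]
  exact abs_integral_integral_kernel_mul_le hJ ((memLp_indicator_iff_restrict ht).2 hu)
    ((memLp_indicator_iff_restrict ht).2 hv)

end MeasureTheory

theorem lyapunov_functional_lower_bound_general
    (Ω : Set (EuclideanSpace ℝ (Fin 3)))
    (hΩfin : volume Ω < ⊤)
    (J : EuclideanSpace ℝ (Fin 3) → ℝ) (hJ : Integrable J)
    (ha_pos : ∀ᵐ x ∂(volume.restrict Ω), (∫ y in Ω, J (x - y)) ≥ 0)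
    (F : ℝ → ℝ)
    (c₁ c₂ : ℝ) (hc₁ : c₁ > (∫ x, |J x|) / 2)
    (hF_low : ∀ s, F s ≥ c₁ * s ^ 2 - c₂)
    (M₀ : ℝ) :
    ∃ C : ℝ, 0 ≤ C ∧
      ∀ φ : EuclideanSpace ℝ (Fin 3) → ℝ,
        MemLp φ 2 (volume.restrict Ω) →
        IntegrableOn (fun x => F (φ x)) Ω →
        (∫ x in Ω, (∫ y in Ω, J (x - y)) * (φ x) ^ 2)
          + 2 * (∫ x in Ω, F (φ x))
          - (∫ x in Ω, ∫ y in Ω, J (x - y) * φ y * (φ x - M₀))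
        ≥ -C := by
  set cJ := ∫ x, |J x|
  set V := (volume.restrict Ω).real Set.univ
  have hcJ : 0 ≤ cJ := integral_nonneg fun _ => abs_nonneg _
  obtain ⟨δ, hδ, hδcJ⟩ : ∃ δ > 0, cJ * δ ≤ 2 * c₁ - cJ :=
    ⟨(2 * c₁ - cJ) / (cJ + 1), by apply div_pos <;> linarith, by
      rw [mul_div_assoc', div_le_iff₀ (by linarith)]; nlinarith⟩
  refine ⟨max 0 (2 * c₂ * V + cJ / 2 * ((1 + δ⁻¹) * M₀ ^ 2) * V), le_max_left _ _,
    fun φ hφ hFφ => ?_⟩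
  have : IsFiniteMeasure (volume.restrict Ω) := isFiniteMeasure_restrict.2 hΩfin.ne
  set S := ∫ x in Ω, φ x ^ 2
  have hS : 0 ≤ S := integral_nonneg fun _ => sq_nonneg _
  have hlocal : 0 ≤ ∫ x in Ω, (∫ y in Ω, J (x - y)) * φ x ^ 2 :=
    integral_nonneg_of_ae (ha_pos.mono fun x hx => mul_nonneg hx (sq_nonneg _))
  have hF : c₁ * S + V * -c₂ ≤ ∫ x in Ω, F (φ x) :=
    (integral_mul_sq_add_const hφ c₁ (-c₂)).symm.trans_le <| integral_mono
      ((hφ.integrable_sq.const_mul _).add (integrable_const _)) hFφ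
      fun x => by linarith [hF_low (φ x)]
  have hT : ∫ x in Ω, (φ x - M₀) ^ 2 ≤ (1 + δ) * S + V * ((1 + δ⁻¹) * M₀ ^ 2) :=
    (integral_mono (hφ.sub (memLp_const M₀)).integrable_sq
      ((hφ.integrable_sq.const_mul _).add (integrable_const _))
      fun x => sub_sq_le_one_add_mul_sq_add hδ (φ x) M₀).trans_eq
      (integral_mul_sq_add_const hφ _ _)
  have hD : ∫ x in Ω, ∫ y in Ω, J (x - y) * φ y * (φ x - M₀)
      ≤ cJ / 2 * (S + ∫ x in Ω, (φ x - M₀) ^ 2) :=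
    (abs_le.1 (abs_setIntegral_setIntegral_kernel_mul_le (v := fun x => φ x - M₀) Ω hJ hφ
      (hφ.sub (memLp_const M₀)))).2
  have hcJT := mul_le_mul_of_nonneg_left hT hcJ
  have hSterm : 0 ≤ (2 * c₁ - cJ - cJ * δ / 2) * S := mul_nonneg (by linarith) hS
  linarith [le_max_right 0 (2 * c₂ * V + cJ / 2 * ((1 + δ⁻¹) * M₀ ^ 2) * V)]

/-- lower bound making the Lyapunov functional nonnegative:
there is `C ≥ 0` such that for all `φ ∈ L²(Ω)` with `F∘φ ∈ L¹(Ω)`,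
`∫ a φ² + 2∫ F(φ) − ∬ J(x−y) φ(y)(φ(x) − M₀) ≥ −C`. -/
theorem lyapunov_functional_lower_bound
    (Ω : Set (EuclideanSpace ℝ (Fin 3))) (hΩ : MeasurableSet Ω)
    (hΩfin : volume Ω < ⊤)
    (J : EuclideanSpace ℝ (Fin 3) → ℝ) (hJ : Integrable J)
    (hJeven : ∀ x, J (-x) = J x)
    (ha_pos : ∀ᵐ x ∂(volume.restrict Ω), (∫ y in Ω, J (x - y)) ≥ 0)
    (F : ℝ → ℝ) (hF : Continuous F)
    (c₁ c₂ : ℝ) (hc₁ : c₁ > (∫ x, |J x|) / 2) (hc₂ : 0 ≤ c₂)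
    (hF_low : ∀ s, F s ≥ c₁ * s ^ 2 - c₂)
    (M₀ : ℝ) :
    ∃ C : ℝ, 0 ≤ C ∧
      ∀ φ : EuclideanSpace ℝ (Fin 3) → ℝ,
        MemLp φ 2 (volume.restrict Ω) →
        IntegrableOn (fun x => F (φ x)) Ω →
        (∫ x in Ω, (∫ y in Ω, J (x - y)) * (φ x) ^ 2)
          + 2 * (∫ x in Ω, F (φ x))
          - (∫ x in Ω, ∫ y in Ω, J (x - y) * φ y * (φ x - M₀))
        ≥ -C :=
  lyapunov_functional_lower_bound_general Ω hΩfin J hJ ha_pos F c₁ c₂ hc₁ hF_low M₀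
end

section
/- Let c₅ > 0, c₆ ≥ 0, q > 0, and let F : ℝ → ℝ be twice continuously differentiable with F''(s) ≥ c₅ |s|^{2q} − c₆ for all s ∈ ℝ. Then for every m ∈ ℝ there exists a constant c₉ ≥ 0 such that for all s ∈ ℝ: (1/2) |F'(s)| (1 + |s|) ≤ F'(s)·(s − m) + c₉. -/
/-- under the coercivity assumption (H5)
`F''(s) ≥ c₅ |s|^{2q} − c₆`, for every `m` there is `c₉ ≥ 0` with
`½ |F'(s)| (1 + |s|) ≤ F'(s)(s − m) + c₉` for all `s`. -/
theorem deriv_sign_coercivity_bound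
    (F F' F'' : ℝ → ℝ) (c₅ c₆ q : ℝ)
    (hc₅ : 0 < c₅) (hc₆ : 0 ≤ c₆) (hq : 0 < q)
    (hF' : ∀ s, HasDerivAt F (F' s) s)
    (hF'' : ∀ s, HasDerivAt F' (F'' s) s)
    (hF''cont : Continuous F'')
    (hH5 : ∀ s, F'' s ≥ c₅ * |s| ^ (2 * q) - c₆) :
    ∀ m : ℝ, ∃ c₉ : ℝ, 0 ≤ c₉ ∧
      ∀ s : ℝ, (1 / 2 : ℝ) * |F' s| * (1 + |s|) ≤ F' s * (s - m) + c₉ := by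
  intro m
  have hF'cont : Continuous F' :=
    continuous_iff_continuousAt.2 fun s => (hF'' s).continuousAt
  -- the threshold where F'' ≥ 1
  set R₀ : ℝ := ((c₆ + 1) / c₅) ^ (1 / (2 * q)) with hR₀def
  have hbase : (0 : ℝ) ≤ (c₆ + 1) / c₅ := by positivity
  have hR₀nonneg : 0 ≤ R₀ := Real.rpow_nonneg hbase _
  have hR₀pow : R₀ ^ (2 * q) = (c₆ + 1) / c₅ := by
    rw [hR₀def, ← Real.rpow_mul hbase, one_div, inv_mul_cancel₀ (by positivity : 2 * q ≠ 0),
      Real.rpow_one]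
  have hF''ge : ∀ s : ℝ, R₀ ≤ |s| → 1 ≤ F'' s := by
    intro s hs
    have h1 : R₀ ^ (2 * q) ≤ |s| ^ (2 * q) :=
      Real.rpow_le_rpow hR₀nonneg hs (by positivity)
    have h2 := hH5 s
    have h3 : c₅ * ((c₆ + 1) / c₅) = c₆ + 1 := by field_simp
    nlinarith [mul_le_mul_of_nonneg_left h1 hc₅.le]
  -- g = F' - id is monotone outside [-R₀, R₀]
  have hg : ∀ s : ℝ, HasDerivAt (fun t => F' t - t) (F'' s - 1) s :=
    fun s => (hF'' s).sub (hasDerivAt_id s)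
  have hgdiff : Differentiable ℝ (fun t => F' t - t) := fun s => (hg s).differentiableAt
  have hgderiv : ∀ s : ℝ, deriv (fun t => F' t - t) s = F'' s - 1 := fun s => (hg s).deriv
  have hgcont : Continuous (fun t => F' t - t) := hgdiff.continuous
  have hmono1 : MonotoneOn (fun t => F' t - t) (Set.Ici R₀) := by
    apply monotoneOn_of_deriv_nonneg (convex_Ici R₀) hgcont.continuousOn
      hgdiff.differentiableOn
    intro x hx
    rw [interior_Ici, Set.mem_Ioi] at hx
    rw [hgderiv]
    have : R₀ ≤ |x| := le_trans hx.le (le_abs_self x)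
    linarith [hF''ge x this]
  have hmono2 : MonotoneOn (fun t => F' t - t) (Set.Iic (-R₀)) := by
    apply monotoneOn_of_deriv_nonneg (convex_Iic (-R₀)) hgcont.continuousOn
      hgdiff.differentiableOn
    intro x hx
    rw [interior_Iic, Set.mem_Iio] at hx
    rw [hgderiv]
    have : R₀ ≤ |x| := by
      rw [abs_of_neg (by linarith)]; linarith
    linarith [hF''ge x this]
  have hpos : ∀ s : ℝ, R₀ + |F' R₀| ≤ s → 0 ≤ F' s := by
    intro s hs
    have h1 : F' R₀ - R₀ ≤ F' s - s :=
      hmono1 (Set.self_mem_Ici) (by simp only [Set.mem_Ici]; nlinarith [abs_nonneg (F' R₀)])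
        (by nlinarith [abs_nonneg (F' R₀)])
    nlinarith [neg_abs_le (F' R₀)]
  have hneg : ∀ s : ℝ, s ≤ -(R₀ + |F' (-R₀)|) → F' s ≤ 0 := by
    intro s hs
    have h1 : F' s - s ≤ F' (-R₀) - (-R₀) :=
      hmono2 (by simp only [Set.mem_Iic]; nlinarith [abs_nonneg (F' (-R₀))])
        Set.self_mem_Iic (by nlinarith [abs_nonneg (F' (-R₀))])
    linarith [le_abs_self (F' (-R₀))]
  -- the cutoff radius
  set R : ℝ := max (R₀ + |F' R₀| + |F' (-R₀)|) (2 * |m| + 1) with hRdef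
  have hR1 : R₀ + |F' R₀| ≤ R :=
    le_trans (by nlinarith [abs_nonneg (F' (-R₀))]) (le_max_left _ _)
  have hR2 : R₀ + |F' (-R₀)| ≤ R :=
    le_trans (by nlinarith [abs_nonneg (F' R₀)]) (le_max_left _ _)
  have hR3 : 2 * |m| + 1 ≤ R := le_max_right _ _
  have hRpos : 0 < R := lt_of_lt_of_le (by positivity) hR3
  -- bound on the compact part
  set φ : ℝ → ℝ := fun s => (1 / 2 : ℝ) * |F' s| * (1 + |s|) - F' s * (s - m) with hφdef
  have hφcont : Continuous φ := by
    apply Continuous.sub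
    · exact ((continuous_const.mul hF'cont.abs)).mul (continuous_const.add continuous_abs)
    · exact hF'cont.mul (continuous_id.sub continuous_const)
  obtain ⟨x₀, hx₀mem, hx₀⟩ := (isCompact_Icc (a := -R) (b := R)).exists_isMaxOn
    ⟨0, by constructor <;> linarith⟩ hφcont.continuousOn
  refine ⟨max (φ x₀) 0, le_max_right _ _, ?_⟩
  intro s
  rcases le_or_gt |s| R with hsR | hsR
  · have hmem : s ∈ Set.Icc (-R) R := by
      rw [Set.mem_Icc]; constructor <;> [linarith [neg_abs_le s]; linarith [le_abs_self s]]
    have := hx₀ hmem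
    have h2 : φ s ≤ max (φ x₀) 0 := le_trans this (le_max_left _ _)
    simp only [hφdef] at h2
    linarith
  · have hc₉ : (0 : ℝ) ≤ max (φ x₀) 0 := le_max_right _ _
    rcases abs_cases s with ⟨habs, hsign⟩ | ⟨habs, hsign⟩
    · -- s ≥ 0, so s > R
      have hs : R < s := by rwa [habs] at hsR
      have h1 : 0 ≤ F' s := hpos s (by linarith)
      have h2 : 0 ≤ s - m - 1 / 2 * (1 + s) := by
        have := le_abs_self m
        linarith
      rw [abs_of_nonneg h1, habs]
      nlinarith [mul_nonneg h1 h2]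
    · -- s < 0, so s < -R
      have hs : s < -R := by rw [habs] at hsR; linarith
      have h1 : F' s ≤ 0 := hneg s (by linarith)
      have h2 : 0 ≤ (m - s) - 1 / 2 * (1 - s) := by
        have := neg_abs_le m
        linarith
      rw [abs_of_nonpos h1, habs]
      nlinarith [mul_nonneg (neg_nonneg.2 h1) h2]
end

section
/- Let K ≥ 0, c₁ > K/2, c₂ ≥ 0, and let F : ℝ → ℝ be twice differentiable with F''(s) ≥ −K and F(s) ≥ c₁ s² − c₂ for all s ∈ ℝ. Then there exist constants C₁ > 0 and C₂ ≥ 0 such that for all s ∈ ℝ: |F(s)| ≤ C₁ |F'(s)| (1 + |s|) + C₂. -/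
/-!
Since `F'' ≥ -K`, the function `F + K s² / 2` is convex, so it lies above its tangent at `s`;
evaluated at `0` this gives `F s ≤ F 0 + F' s * s + K s² / 2`. Coercivity bounds `K s² / 2` by
`K / (2 c₁) · (F s + c₂)`, and `K / (2 c₁) < 1`, so this term can be absorbed into the left-hand
side. Coercivity also bounds `F` from below by `-c₂`, which controls `|F s|` by `F s + 2 c₂`.
-/

open Set

theorem ConvexOn.add_deriv_mul_sub_le {S : Set ℝ} {g : ℝ → ℝ} {g' x y : ℝ}
    (hg : ConvexOn ℝ S g) (hx : x ∈ S) (hy : y ∈ S) (hg' : HasDerivAt g g' x) :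
    g x + g' * (y - x) ≤ g y := by
  rcases lt_trichotomy x y with hxy | rfl | hyx
  · have h := hg.le_slope_of_hasDerivAt hx hy hxy hg'
    rw [slope_def_field, le_div_iff₀ (sub_pos.2 hxy)] at h
    linarith
  · simp
  · have h := hg.slope_le_of_hasDerivAt hy hx hyx hg'
    rw [slope_def_field, div_le_iff₀ (sub_pos.2 hyx)] at h
    linarith

theorem HasDerivAt.add_half_mul_sq {f : ℝ → ℝ} {f' x : ℝ} (K : ℝ) (hf : HasDerivAt f f' x) :
    HasDerivAt (fun x ↦ f x + K / 2 * x ^ 2) (f' + K * x) x :=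
  (hf.fun_add ((hasDerivAt_pow 2 x).const_mul (K / 2))).congr_deriv (by norm_num; ring)

theorem convexOn_add_half_mul_sq_of_deriv2_ge {f f' f'' : ℝ → ℝ} {K : ℝ}
    (hf : ∀ x, HasDerivAt f (f' x) x) (hf' : ∀ x, HasDerivAt f' (f'' x) x)
    (hK : ∀ x, -K ≤ f'' x) :
    ConvexOn ℝ univ (fun x ↦ f x + K / 2 * x ^ 2) := by
  refine convexOn_of_hasDerivWithinAt2_nonneg (f' := fun x ↦ f' x + K * x)
    (f'' := fun x ↦ f'' x + K) convex_univ
    (fun x _ ↦ ((hf x).add_half_mul_sq K).continuousAt.continuousWithinAt)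
    (fun x _ ↦ ((hf x).add_half_mul_sq K).hasDerivWithinAt)
    (fun x _ ↦ ((hf' x).fun_add (hasDerivAt_const_mul K)).hasDerivWithinAt) fun x _ ↦ ?_
  linarith [hK x]

theorem add_deriv_mul_sub_sub_sq_le_of_deriv2_ge {f f' f'' : ℝ → ℝ} {K : ℝ}
    (hf : ∀ x, HasDerivAt f (f' x) x) (hf' : ∀ x, HasDerivAt f' (f'' x) x)
    (hK : ∀ x, -K ≤ f'' x) (x y : ℝ) :
    f x + f' x * (y - x) - K / 2 * (y - x) ^ 2 ≤ f y := by
  have := (convexOn_add_half_mul_sq_of_deriv2_ge hf hf' hK).add_deriv_mul_sub_le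
    (mem_univ x) (mem_univ y) ((hf x).add_half_mul_sq K)
  linarith

theorem mul_le_abs_mul_one_add_abs (a s : ℝ) : a * s ≤ |a| * (1 + |s|) :=
  calc a * s ≤ |a| * |s| := (le_abs_self _).trans (abs_mul a s).le
    _ ≤ |a| * (1 + |s|) := by gcongr; linarith

/-- under `F'' ≥ −K` (quadratic perturbation of a convex
function) and the coercivity `F(s) ≥ c₁ s² − c₂` with `c₁ > K/2`, there are
constants `C₁ > 0`, `C₂ ≥ 0` with `|F(s)| ≤ C₁ |F'(s)| (1 + |s|) + C₂`. -/
theorem abs_F_le_abs_deriv_bound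
    (F F' F'' : ℝ → ℝ) (K c₁ c₂ : ℝ)
    (hK : 0 ≤ K) (hc₁ : c₁ > K / 2) (hc₂ : 0 ≤ c₂)
    (hF' : ∀ s, HasDerivAt F (F' s) s)
    (hF'' : ∀ s, HasDerivAt F' (F'' s) s)
    (hlow : ∀ s, F'' s ≥ -K)
    (hF_low : ∀ s, F s ≥ c₁ * s ^ 2 - c₂) :
    ∃ C₁ C₂ : ℝ, 0 < C₁ ∧ 0 ≤ C₂ ∧
      ∀ s : ℝ, |F s| ≤ C₁ * |F' s| * (1 + |s|) + C₂ := by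
  have hc₁_pos : 0 < c₁ := by linarith
  have hgap : 0 < 2 * c₁ - K := by linarith
  refine ⟨2 * c₁ / (2 * c₁ - K), (2 * c₁ * |F 0| + K * c₂) / (2 * c₁ - K) + 2 * c₂,
    by positivity, by positivity, fun s ↦ ?_⟩
  have htangent : F s ≤ F 0 + F' s * s + K / 2 * s ^ 2 := by
    have := add_deriv_mul_sub_sub_sq_le_of_deriv2_ge hF' hF'' hlow s 0
    linarith
  have hcoercive := hF_low s
  have hF_le : (2 * c₁ - K) * F s ≤ 2 * c₁ * |F' s| * (1 + |s|) + (2 * c₁ * |F 0| + K * c₂) := by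
    have h2c₁ : 0 ≤ 2 * c₁ := by positivity
    linarith [mul_le_mul_of_nonneg_left htangent h2c₁, mul_le_mul_of_nonneg_left hcoercive hK,
      mul_le_mul_of_nonneg_left (mul_le_abs_mul_one_add_abs (F' s) s) h2c₁,
      mul_le_mul_of_nonneg_left (le_abs_self (F 0)) h2c₁]
  have habs : |F s| ≤ F s + 2 * c₂ :=
    abs_le.2 ⟨by linarith [mul_nonneg hc₁_pos.le (sq_nonneg s)], by linarith⟩
  have hF_bound : F s ≤ 2 * c₁ / (2 * c₁ - K) * |F' s| * (1 + |s|)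
      + (2 * c₁ * |F 0| + K * c₂) / (2 * c₁ - K) := by
    rw [div_mul_eq_mul_div, div_mul_eq_mul_div, ← add_div, le_div_iff₀ hgap]
    linarith
  linarith
end
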